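/- Let K be a field of characteristic different from 3 containing an element ω with ω² + ω + 1 = 0 and ω ≠ 1. Then the set of projective singular points of the cubic x³ + y³ + z³ − 3xyz = 0 (i.e., nonzero triples, up to scaling, where all partial derivatives 3x² − 3yz, 3y² − 3xz, 3z² − 3xy vanish) consists exactly of the three points (1 : 1 : 1), (1 : ω : ω²), and (1 : ω² : ω). -/
import Mathlib


theorem singular_points_of_triangle {K : Type*} [Field K] (hchar : (3 : K) ≠ 0)
    (ω : K) (hω : ω ^ 2 + ω + 1 = 0) (hω1 : ω ≠ 1)
    (x y z : K) (hne : (x, y, z) ≠ (0, 0, 0)) :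
    (3 * x ^ 2 - 3 * (y * z) = 0 ∧ 3 * y ^ 2 - 3 * (x * z) = 0 ∧
        3 * z ^ 2 - 3 * (x * y) = 0) ↔
      ∃ c : K, c ≠ 0 ∧
        ((x, y, z) = (c, c, c) ∨ (x, y, z) = (c, c * ω, c * ω ^ 2) ∨
          (x, y, z) = (c, c * ω ^ 2, c * ω)) := by
  have hω3 : ω ^ 3 = 1 := by linear_combination (ω - 1) * hω
  constructor
  · rintro ⟨h1, h2, h3⟩
    have hx2 : x ^ 2 = y * z := by
      apply mul_left_cancel₀ hchar; linear_combination h1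
    have hy2 : y ^ 2 = x * z := by
      apply mul_left_cancel₀ hchar; linear_combination h2
    have hz2 : z ^ 2 = x * y := by
      apply mul_left_cancel₀ hchar; linear_combination h3
    have hx : x ≠ 0 := by
      intro hx0
      subst hx0
      have hy : y = 0 := by
        have h : y ^ 2 = 0 := by rw [hy2]; ring
        exact pow_eq_zero_iff (two_ne_zero) |>.mp h
      have hz : z = 0 := by
        have h : z ^ 2 = 0 := by rw [hz2]; ring
        exact pow_eq_zero_iff (two_ne_zero) |>.mp h
      exact hne (by simp [hy, hz])
    have hy3 : y ^ 3 = x ^ 3 := by linear_combination y * hy2 - x * hx2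
    have hfac : (y - x) * (y - ω * x) * (y - ω ^ 2 * x) = 0 := by
      linear_combination hy3 + (x ^ 2 * y - x * y ^ 2) * hω + (x ^ 2 * y - x ^ 3) * hω3
    refine ⟨x, hx, ?_⟩
    rcases mul_eq_zero.mp hfac with hf | hf
    · rcases mul_eq_zero.mp hf with hf | hf
      · have hyx : y = x := by linear_combination hf
        have hzx : z = x := by
          apply mul_left_cancel₀ hx; linear_combination -hy2 + (y + x) * hyx
        exact Or.inl (by rw [hyx, hzx])
      · have hyx : y = ω * x := by linear_combination hf
        have hzx : z = ω ^ 2 * x := by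
          apply mul_left_cancel₀ hx
          linear_combination -hy2 + (y + ω * x) * hyx
        exact Or.inr (Or.inl (by rw [hyx, hzx]; simp [mul_comm]))
    · have hyx : y = ω ^ 2 * x := by linear_combination hf
      have hzx : z = ω * x := by
        apply mul_left_cancel₀ hx
        linear_combination -hy2 + (y + ω ^ 2 * x) * hyx + x ^ 2 * ω * hω3
      exact Or.inr (Or.inr (by rw [hyx, hzx]; simp [mul_comm]))
  · rintro ⟨c, hc, h | h | h⟩ <;>
      simp only [Prod.mk.injEq] at h <;> obtain ⟨rfl, rfl, rfl⟩ := h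
    · exact ⟨by ring, by ring, by ring⟩
    · exact ⟨by linear_combination (-3 * x ^ 2) * hω3, by ring,
        by linear_combination 3 * x ^ 2 * ω * hω3⟩
    · exact ⟨by linear_combination (-3 * x ^ 2) * hω3,
        by linear_combination 3 * x ^ 2 * ω * hω3, by ring⟩
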